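/- arXiv:1207.3012 — 6 statements merged into one kernel-verified Lean document; each statement's English description precedes it below -/
import Mathlib

section
/- If f is convex on S with minimizer x*, satisfies f(x) - f(x*) ≥ λ‖x - x*‖^κ on S, and all subgradients on S have norm at most G, then for all x ∈ S, f(x) - f(x*) ≤ (G^κ/λ)^(1/(κ-1)). -/
/-!
A subgradient at `x` of norm at most `G` gives `f x - f x* ≤ G r` with `r = ‖x - x*‖`, while the
growth condition gives `λ r ^ κ ≤ f x - f x*`. Together `λ r ^ κ ≤ G r`, i.e.
`r ≤ (G / λ) ^ (1 / (κ - 1))`, and so `f x - f x* ≤ G (G / λ) ^ (1 / (κ - 1)) = (G ^ κ / λ) ^ (1 / (κ - 1))`.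
-/

open scoped RealInnerProductSpace

theorem sub_le_mul_norm_of_subgradient {E : Type*} [NormedAddCommGroup E] [InnerProductSpace ℝ E]
    {f : E → ℝ} {x y g : E} {G : ℝ} (hg : f y ≥ f x + ⟪g, y - x⟫) (hgG : ‖g‖ ≤ G) :
    f x - f y ≤ G * ‖x - y‖ := by
  rw [← neg_sub x y, inner_neg_right] at hg
  calc f x - f y ≤ ⟪g, x - y⟫ := by linarith
    _ ≤ ‖g‖ * ‖x - y‖ := real_inner_le_norm _ _
    _ ≤ G * ‖x - y‖ := by gcongr

namespace Real

theorem le_rpow_inv_sub_one_of_mul_rpow_le {r lam κ G : ℝ} (hr : 0 ≤ r) (hlam : 0 < lam)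
    (hκ : 1 < κ) (hG : 0 ≤ G) (h : lam * r ^ κ ≤ G * r) : r ≤ (G / lam) ^ (1 / (κ - 1)) := by
  rcases hr.eq_or_lt with rfl | hr
  · exact rpow_nonneg (div_nonneg hG hlam.le) _
  have hpow : r ^ (κ - 1) ≤ G / lam := by
    rw [le_div_iff₀ hlam, ← mul_le_mul_iff_left₀ hr]
    calc r ^ (κ - 1) * lam * r = lam * r ^ κ := by
          rw [rpow_sub hr, rpow_one]; field_simp
      _ ≤ G * r := h
  calc r = (r ^ (κ - 1)) ^ (1 / (κ - 1)) := by
        rw [← rpow_mul hr.le, mul_one_div_cancel (by linarith), rpow_one]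
    _ ≤ (G / lam) ^ (1 / (κ - 1)) := by gcongr

theorem mul_div_rpow_inv_sub_one {lam κ G : ℝ} (hG : 0 < G) (hlam : 0 < lam) (hκ : κ ≠ 1) :
    G * (G / lam) ^ (1 / (κ - 1)) = (G ^ κ / lam) ^ (1 / (κ - 1)) := by
  have hexp : κ * (1 / (κ - 1)) = 1 + 1 / (κ - 1) := by
    field_simp [sub_ne_zero.mpr hκ]
    ring
  rw [div_rpow (rpow_pos_of_pos hG κ).le hlam.le, div_rpow hG.le hlam.le, ← rpow_mul hG.le, hexp,
    rpow_add hG, rpow_one]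
  ring

end Real

theorem function_error_bound_general
    (d : ℕ) (S : Set (EuclideanSpace ℝ (Fin d)))
    (f : EuclideanSpace ℝ (Fin d) → ℝ)
    (xstar : EuclideanSpace ℝ (Fin d)) (hxstar : xstar ∈ S)
    (lam κ G : ℝ) (hlam : 0 < lam) (hκ : 1 < κ) (hG : 0 < G)
    (hgrowth : ∀ x ∈ S, f x - f xstar ≥ lam * ‖x - xstar‖ ^ κ)
    (hsub : ∀ x ∈ S, ∃ g : EuclideanSpace ℝ (Fin d),
      (∀ y ∈ S, f y ≥ f x + ⟪g, y - x⟫) ∧ ‖g‖ ≤ G) :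
    ∀ x ∈ S, f x - f xstar ≤ (G ^ κ / lam) ^ (1 / (κ - 1)) := by
  intro x hx
  obtain ⟨g, hg, hgG⟩ := hsub x hx
  have hupper : f x - f xstar ≤ G * ‖x - xstar‖ :=
    sub_le_mul_norm_of_subgradient (hg xstar hxstar) hgG
  have hdist : ‖x - xstar‖ ≤ (G / lam) ^ (1 / (κ - 1)) :=
    Real.le_rpow_inv_sub_one_of_mul_rpow_le (norm_nonneg _) hlam hκ hG.le
      ((hgrowth x hx).le.trans hupper)
  calc f x - f xstar ≤ G * ‖x - xstar‖ := hupper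
    _ ≤ G * (G / lam) ^ (1 / (κ - 1)) := by gcongr
    _ = (G ^ κ / lam) ^ (1 / (κ - 1)) := Real.mul_div_rpow_inv_sub_one hG hlam hκ.ne'

theorem function_error_bound
    (d : ℕ) (S : Set (EuclideanSpace ℝ (Fin d))) (hS : Convex ℝ S)
    (f : EuclideanSpace ℝ (Fin d) → ℝ) (hf : ConvexOn ℝ S f)
    (xstar : EuclideanSpace ℝ (Fin d)) (hxstar : xstar ∈ S)
    (hmin : ∀ y ∈ S, f xstar ≤ f y)
    (lam κ G : ℝ) (hlam : 0 < lam) (hκ : 1 < κ) (hG : 0 < G)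
    (hgrowth : ∀ x ∈ S, f x - f xstar ≥ lam * ‖x - xstar‖ ^ κ)
    (hsub : ∀ x ∈ S, ∃ g : EuclideanSpace ℝ (Fin d),
      (∀ y ∈ S, f y ≥ f x + ⟪g, y - x⟫) ∧ ‖g‖ ≤ G)
    (hsubbd : ∀ x ∈ S, ∀ g : EuclideanSpace ℝ (Fin d),
      (∀ y ∈ S, f y ≥ f x + ⟪g, y - x⟫) → ‖g‖ ≤ G) :
    ∀ x ∈ S, f x - f xstar ≤ (G ^ κ / lam) ^ (1 / (κ - 1)) :=
  function_error_bound_general d S f xstar hxstar lam κ G hlam hκ hG hgrowth hsub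
end

section
/- For κ ≥ 2 and all real x, y and all t ∈ [0,1], t|x|^κ + (1-t)|y|^κ ≥ |tx + (1-t)y|^κ + (2/2^κ)·t(1-t)·|x - y|^κ; i.e., the function x ↦ |x|^κ on ℝ is κ-uniformly convex with parameter λ = 4/2^κ. -/
/-!
Writing `‖z‖ ^ p = (‖z‖ ^ 2) ^ (p / 2)`, superadditivity of `r ↦ r ^ (p / 2)` together with the
parallelogram law gives Clarkson's inequality
`‖x + y‖ ^ p + ‖x - y‖ ^ p ≤ 2 ^ (p - 1) * (‖x‖ ^ p + ‖y‖ ^ p)`, i.e. a midpoint version of uniform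
convexity of `‖·‖ ^ p`. For a general weight `a ≤ 1/2` the point `a • x + (1 - a) • y` is a convex
combination of the midpoint and `y`, so convexity of `‖·‖ ^ p` spreads the midpoint gain over all
weights, losing only a factor `2`.
-/

open Real Set

lemma Real.rpow_add_le_mul_rpow_add_rpow {a b p : ℝ} (ha : 0 ≤ a) (hb : 0 ≤ b) (hp : 1 ≤ p) :
    (a + b) ^ p ≤ 2 ^ (p - 1) * (a ^ p + b ^ p) := by
  lift a to NNReal using ha
  lift b to NNReal using hb
  exact_mod_cast NNReal.rpow_add_le_mul_rpow_add_rpow a b hp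

section NormedSpace

variable {E : Type*} [NormedAddCommGroup E] [NormedSpace ℝ E]

lemma convexOn_univ_norm_rpow {p : ℝ} (hp : 1 ≤ p) : ConvexOn ℝ univ fun x : E ↦ ‖x‖ ^ p := by
  refine ⟨convex_univ, fun x _ y _ a b ha hb hab ↦ ?_⟩
  calc ‖a • x + b • y‖ ^ p ≤ (a * ‖x‖ + b * ‖y‖) ^ p := by
        gcongr
        exact convexOn_univ_norm.2 (mem_univ x) (mem_univ y) ha hb hab
    _ ≤ a * ‖x‖ ^ p + b * ‖y‖ ^ p :=
        (convexOn_rpow hp).2 (norm_nonneg x) (norm_nonneg y) ha hb hab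

theorem ConvexOn.uniformConvexOn_of_midpoint {s : Set E} {f : E → ℝ} {ψ : ℝ → ℝ}
    (hf : ConvexOn ℝ s f) (hψ : ∀ r, 0 ≤ r → 0 ≤ ψ r)
    (hmid : ∀ x ∈ s, ∀ y ∈ s, f ((2 : ℝ)⁻¹ • (x + y)) + ψ ‖x - y‖ ≤ (f x + f y) / 2) :
    UniformConvexOn s (fun r ↦ 2 * ψ r) f := by
  have key : ∀ x ∈ s, ∀ y ∈ s, ∀ a b : ℝ, 0 ≤ a → a ≤ b → a + b = 1 →
      f (a • x + b • y) ≤ a * f x + b * f y - a * b * (2 * ψ ‖x - y‖) := by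
    intro x hx y hy a b ha hab habs
    have hm : (2 : ℝ)⁻¹ • (x + y) ∈ s := by
      rw [smul_add]
      exact hf.1 hx hy (by norm_num) (by norm_num) (by norm_num)
    have hcomb : a • x + b • y = (2 * a) • ((2 : ℝ)⁻¹ • (x + y)) + (b - a) • y := by module
    have hslack : 0 ≤ a * (1 - b) * ψ ‖x - y‖ :=
      mul_nonneg (mul_nonneg ha (by linarith)) (hψ _ (norm_nonneg _))
    calc f (a • x + b • y) ≤ 2 * a * f ((2 : ℝ)⁻¹ • (x + y)) + (b - a) * f y := by
          rw [hcomb]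
          exact hf.2 hm hy (by positivity) (by linarith) (by linarith)
      _ ≤ 2 * a * ((f x + f y) / 2 - ψ ‖x - y‖) + (b - a) * f y := by
          gcongr
          linarith [hmid x hx y hy]
      _ ≤ a * f x + b * f y - a * b * (2 * ψ ‖x - y‖) := by linarith
  refine ⟨hf.1, fun x hx y hy a b ha hb habs ↦ ?_⟩
  rcases le_total a b with hab | hba
  · exact key x hx y hy a b ha hab habs
  · have := key y hy x hx b a hb hba (by linarith)
    rw [add_comm (b • y), norm_sub_rev] at this
    simp only [smul_eq_mul]
    linarith

end NormedSpace

section InnerProductSpace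

variable {E : Type*} [NormedAddCommGroup E] [InnerProductSpace ℝ E]

theorem norm_add_rpow_add_norm_sub_rpow_le {p : ℝ} (hp : 2 ≤ p) (x y : E) :
    ‖x + y‖ ^ p + ‖x - y‖ ^ p ≤ 2 ^ (p - 1) * (‖x‖ ^ p + ‖y‖ ^ p) := by
  obtain ⟨q, rfl⟩ : ∃ q, p = 2 * q := ⟨p / 2, by ring⟩
  have hq : 1 ≤ q := by linarith
  have hsq : ∀ z : E, ‖z‖ ^ (2 * q) = (‖z‖ ^ 2) ^ q := fun z ↦ by
    rw [rpow_mul (norm_nonneg z)]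
    norm_cast
  calc ‖x + y‖ ^ (2 * q) + ‖x - y‖ ^ (2 * q) = (‖x + y‖ ^ 2) ^ q + (‖x - y‖ ^ 2) ^ q := by
        rw [hsq, hsq]
    _ ≤ (‖x + y‖ ^ 2 + ‖x - y‖ ^ 2) ^ q := add_rpow_le_rpow_add (by positivity) (by positivity) hq
    _ = 2 ^ q * (‖x‖ ^ 2 + ‖y‖ ^ 2) ^ q := by
        rw [parallelogram_law_with_norm ℝ, mul_rpow (by norm_num) (by positivity)]
    _ ≤ 2 ^ q * (2 ^ (q - 1) * ((‖x‖ ^ 2) ^ q + (‖y‖ ^ 2) ^ q)) := by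
        gcongr
        exact rpow_add_le_mul_rpow_add_rpow (by positivity) (by positivity) hq
    _ = 2 ^ (2 * q - 1) * (‖x‖ ^ (2 * q) + ‖y‖ ^ (2 * q)) := by
        rw [hsq x, hsq y, ← mul_assoc, ← rpow_add two_pos]
        ring_nf

theorem norm_midpoint_rpow_add_le {p : ℝ} (hp : 2 ≤ p) (x y : E) :
    ‖(2 : ℝ)⁻¹ • (x + y)‖ ^ p + ‖x - y‖ ^ p / 2 ^ p ≤ (‖x‖ ^ p + ‖y‖ ^ p) / 2 := by
  calc ‖(2 : ℝ)⁻¹ • (x + y)‖ ^ p + ‖x - y‖ ^ p / 2 ^ p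
      = (‖x + y‖ ^ p + ‖x - y‖ ^ p) / 2 ^ p := by
        rw [norm_smul, mul_rpow (by positivity) (norm_nonneg _), norm_inv, Real.norm_two,
          inv_rpow zero_le_two]
        ring
    _ ≤ 2 ^ (p - 1) * (‖x‖ ^ p + ‖y‖ ^ p) / 2 ^ p := by
        gcongr
        exact norm_add_rpow_add_norm_sub_rpow_le hp x y
    _ = (‖x‖ ^ p + ‖y‖ ^ p) / 2 := by
        rw [rpow_sub_one two_ne_zero]
        field_simp

theorem uniformConvexOn_univ_norm_rpow {p : ℝ} (hp : 2 ≤ p) :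
    UniformConvexOn univ (fun r ↦ 2 / 2 ^ p * r ^ p) fun x : E ↦ ‖x‖ ^ p := by
  have h := (convexOn_univ_norm_rpow (E := E) (by linarith)).uniformConvexOn_of_midpoint
    (ψ := fun r ↦ r ^ p / 2 ^ p) (fun r hr ↦ by positivity)
    (fun x _ y _ ↦ norm_midpoint_rpow_add_le hp x y)
  convert h using 2 with r
  ring

end InnerProductSpace

theorem abs_rpow_uniformly_convex
    (κ : ℝ) (hκ : 2 ≤ κ) :
    ∀ (x y t : ℝ), 0 ≤ t → t ≤ 1 →
      t * |x| ^ κ + (1 - t) * |y| ^ κ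
        ≥ |t * x + (1 - t) * y| ^ κ + (2 / 2 ^ κ) * (t * (1 - t)) * |x - y| ^ κ := by
  intro x y t ht0 ht1
  have h := (uniformConvexOn_univ_norm_rpow (E := ℝ) hκ).2 (mem_univ x) (mem_univ y) ht0
    (sub_nonneg.2 ht1) (add_sub_cancel t 1)
  simp only [Real.norm_eq_abs, smul_eq_mul] at h
  linarith
end

section
/- For κ ≥ 2 and all real x, y, the midpoint inequality (1/2)|x|^κ + (1/2)|y|^κ ≥ |(x+y)/2|^κ + |(x-y)/2|^κ holds. -/
/-! With `p = κ / 2 ≥ 1` and `a = (x + y) / 2`, `b = (x - y) / 2`, write `|z| ^ κ = (z ^ 2) ^ p`.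
Superadditivity of `t ↦ t ^ p` gives `(a²)ᵖ + (b²)ᵖ ≤ (a² + b²)ᵖ`, the parallelogram law gives
`a² + b² = (x² + y²) / 2`, and convexity of `t ↦ t ^ p` bounds `((x² + y²) / 2)ᵖ` by the
mean of `(x²)ᵖ` and `(y²)ᵖ`. -/

lemma Real.abs_rpow_eq_sq_rpow_half (z κ : ℝ) : |z| ^ κ = (z ^ 2) ^ (κ / 2) := by
  rw [← sq_abs, ← Real.rpow_natCast, ← Real.rpow_mul (abs_nonneg z)]
  ring_nf

theorem abs_rpow_midpoint_inequality
    (κ : ℝ) (hκ : 2 ≤ κ) (x y : ℝ) :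
    (1 / 2) * |x| ^ κ + (1 / 2) * |y| ^ κ
      ≥ |(x + y) / 2| ^ κ + |(x - y) / 2| ^ κ := by
  have hp : 1 ≤ κ / 2 := by linarith
  simp only [Real.abs_rpow_eq_sq_rpow_half _ κ]
  calc (((x + y) / 2) ^ 2) ^ (κ / 2) + (((x - y) / 2) ^ 2) ^ (κ / 2)
      ≤ (((x + y) / 2) ^ 2 + ((x - y) / 2) ^ 2) ^ (κ / 2) :=
        Real.add_rpow_le_rpow_add (sq_nonneg _) (sq_nonneg _) hp
    _ = ((1 / 2) * x ^ 2 + (1 / 2) * y ^ 2) ^ (κ / 2) := by ring_nf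
    _ ≤ (1 / 2) * (x ^ 2) ^ (κ / 2) + (1 / 2) * (y ^ 2) ^ (κ / 2) := by
        simpa only [smul_eq_mul] using (convexOn_rpow hp).2 (sq_nonneg x) (sq_nonneg y)
          (by norm_num) (by norm_num) (add_halves 1)
end

section
/- Let f : ℝ → ℝ be convex and suppose that for some λ > 0 and κ ≥ 2, the midpoint inequality (1/2)f(x) + (1/2)f(y) ≥ f((x+y)/2) + (λ/4)|x-y|^κ holds for all x, y. Then for all x, y and all t ∈ [0,1], t f(x) + (1-t) f(y) ≥ f(tx+(1-t)y) + (λ/4) t(1-t) |x-y|^κ. (Midpoint uniform convexity plus convexity implies uniform convexity with halved constant.) -/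
/-! For `t ≤ 1/2`, the point `t x + (1 - t) y` is the convex combination `2t · m + (1 - 2t) · y`
of the midpoint `m` and `y`, so convexity along `[m, y]` transfers the midpoint gap `c` with
weight `2t ≥ t (1 - t)`; the case `t ≥ 1/2` follows by exchanging `x` and `y`. -/

open Set

namespace ConvexOn

variable {s : Set ℝ} {f : ℝ → ℝ} {x y c t : ℝ}

theorem add_two_mul_le_of_midpoint_gap (hf : ConvexOn ℝ s f) (hx : x ∈ s) (hy : y ∈ s)
    (hmid : f ((x + y) / 2) + c ≤ (f x + f y) / 2) (ht₀ : 0 ≤ t) (ht : t ≤ 1 / 2) :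
    f (t * x + (1 - t) * y) + 2 * t * c ≤ t * f x + (1 - t) * f y := by
  have hm : (x + y) / 2 ∈ s := by
    simpa [midpoint_eq_smul_add, smul_eq_mul, div_eq_inv_mul] using hf.1.midpoint_mem hx hy
  have hconv := hf.2 hm hy (by linarith : 0 ≤ 2 * t) (by linarith : 0 ≤ 1 - 2 * t) (by ring)
  have hpt : 2 * t * ((x + y) / 2) + (1 - 2 * t) * y = t * x + (1 - t) * y := by ring
  simp only [smul_eq_mul, hpt] at hconv
  have hscaled := mul_le_mul_of_nonneg_left hmid (by linarith : 0 ≤ 2 * t)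
  linarith

theorem add_mul_mul_le_of_midpoint_gap (hf : ConvexOn ℝ s f) (hx : x ∈ s) (hy : y ∈ s)
    (hc : 0 ≤ c) (hmid : f ((x + y) / 2) + c ≤ (f x + f y) / 2) (ht₀ : 0 ≤ t) (ht₁ : t ≤ 1) :
    f (t * x + (1 - t) * y) + t * (1 - t) * c ≤ t * f x + (1 - t) * f y := by
  rcases le_total t (1 / 2) with ht | ht
  · have hgap := hf.add_two_mul_le_of_midpoint_gap hx hy hmid ht₀ ht
    have hslack : 0 ≤ t * (1 + t) * c := by positivity
    linarith
  · have hmid' : f ((y + x) / 2) + c ≤ (f y + f x) / 2 := by rwa [add_comm y, add_comm (f y)]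
    have hgap := hf.add_two_mul_le_of_midpoint_gap (t := 1 - t) hy hx hmid' (by linarith)
      (by linarith)
    have hpt : (1 - t) * y + (1 - (1 - t)) * x = t * x + (1 - t) * y := by ring
    rw [hpt] at hgap
    have hslack : 0 ≤ (1 - t) * (2 - t) * c :=
      mul_nonneg (mul_nonneg (by linarith) (by linarith)) hc
    linarith

end ConvexOn

theorem midpoint_uniform_convexity_implies_uniform_convexity_general
    (f : ℝ → ℝ) (hf : ConvexOn ℝ Set.univ f)
    (lam κ : ℝ) (hlam : 0 < lam)
    (hmid : ∀ x y : ℝ,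
      (1 / 2) * f x + (1 / 2) * f y ≥ f ((x + y) / 2) + (lam / 4) * |x - y| ^ κ) :
    ∀ (x y t : ℝ), 0 ≤ t → t ≤ 1 →
      t * f x + (1 - t) * f y
        ≥ f (t * x + (1 - t) * y) + (lam / 4) * t * (1 - t) * |x - y| ^ κ := by
  intro x y t ht₀ ht₁
  have hgap : f ((x + y) / 2) + lam / 4 * |x - y| ^ κ ≤ (f x + f y) / 2 := by
    linarith [hmid x y]
  have hconv :=
    hf.add_mul_mul_le_of_midpoint_gap (mem_univ x) (mem_univ y) (by positivity) hgap ht₀ ht₁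
  linarith

theorem midpoint_uniform_convexity_implies_uniform_convexity
    (f : ℝ → ℝ) (hf : ConvexOn ℝ Set.univ f)
    (lam κ : ℝ) (hlam : 0 < lam) (hκ : 2 ≤ κ)
    (hmid : ∀ x y : ℝ,
      (1 / 2) * f x + (1 / 2) * f y ≥ f ((x + y) / 2) + (lam / 4) * |x - y| ^ κ) :
    ∀ (x y t : ℝ), 0 ≤ t → t ≤ 1 →
      t * f x + (1 - t) * f y
        ≥ f (t * x + (1 - t) * y) + (lam / 4) * t * (1 - t) * |x - y| ^ κ :=
  midpoint_uniform_convexity_implies_uniform_convexity_general f hf lam κ hlam hmid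
end

section
/- For any κ > 1 with κ < 2, no twice continuously differentiable function f : ℝ → ℝ can satisfy the uniform convexity condition f(y) ≥ f(x) + f'(x)(y-x) + (λ/2)|x-y|^κ for all x, y in an open interval, for any λ > 0. -/
/-!
Adding the uniform convexity inequality at `(x, y)` and at `(y, x)` makes `f'` strongly monotone:
`λ |y - x| ^ κ ≤ (f' y - f' x) (y - x)`. Since `f'` is differentiable at an interior point `x₀`,
the right-hand side is `O(|y - x₀| ^ 2)` as `y → x₀`, which cannot dominate `|y - x₀| ^ κ` for `κ < 2`.
-/

open Filter Topology

theorem mul_abs_sub_rpow_le_sub_mul_sub {f f' : ℝ → ℝ} {s : Set ℝ} {c κ : ℝ}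
    (hUC : ∀ x ∈ s, ∀ y ∈ s, f y - f x - f' x * (y - x) ≥ (c / 2) * |y - x| ^ κ)
    {x y : ℝ} (hx : x ∈ s) (hy : y ∈ s) :
    c * |y - x| ^ κ ≤ (f' y - f' x) * (y - x) := by
  have hxy := hUC x hx y hy
  have hyx := hUC y hy x hx
  rw [abs_sub_comm] at hyx
  linarith

theorem eventually_mul_sq_lt_mul_rpow {c κ : ℝ} (x₀ C : ℝ) (hc : 0 < c) (hκ : κ < 2) :
    ∀ᶠ y in 𝓝[>] x₀, C * (y - x₀) ^ 2 < c * (y - x₀) ^ κ := by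
  have hcont : Continuous fun y : ℝ => C * (y - x₀) ^ (2 - κ) :=
    ((continuous_sub_right x₀).rpow_const fun _ => Or.inr (by linarith)).const_mul C
  have hsmall : ∀ᶠ y in 𝓝 x₀, C * (y - x₀) ^ (2 - κ) < c :=
    (hcont.tendsto' x₀ 0 (by simp [Real.zero_rpow (by linarith : 2 - κ ≠ 0)])).eventually_lt_const
      hc
  filter_upwards [hsmall.filter_mono nhdsWithin_le_nhds, self_mem_nhdsWithin]
    with y hy (hxy : x₀ < y)
  have ht : 0 < y - x₀ := sub_pos.mpr hxy
  calc C * (y - x₀) ^ 2 = C * (y - x₀) ^ (2 - κ) * (y - x₀) ^ κ := by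
        rw [mul_assoc, ← Real.rpow_add ht, sub_add_cancel, Real.rpow_two]
    _ < c * (y - x₀) ^ κ := mul_lt_mul_of_pos_right hy (Real.rpow_pos_of_pos ht κ)

theorem not_eventually_mul_abs_sub_rpow_le_of_differentiableAt {g : ℝ → ℝ} {x₀ c κ : ℝ}
    (hg : DifferentiableAt ℝ g x₀) (hc : 0 < c) (hκ : κ < 2) :
    ¬ ∀ᶠ y in 𝓝 x₀, c * |y - x₀| ^ κ ≤ (g y - g x₀) * (y - x₀) := by
  intro hlower
  obtain ⟨C, hC⟩ := hg.hasDerivAt.isBigO_sub.bound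
  obtain ⟨y, hy, hyC, hlt, hxy⟩ := ((hlower.filter_mono nhdsWithin_le_nhds).and
    ((hC.filter_mono nhdsWithin_le_nhds).and
      ((eventually_mul_sq_lt_mul_rpow x₀ C hc hκ).and self_mem_nhdsWithin))).exists
  have ht : 0 < y - x₀ := sub_pos.mpr hxy
  rw [Real.norm_eq_abs, Real.norm_eq_abs, abs_of_pos ht] at hyC
  rw [abs_of_pos ht] at hy
  have hupper : (g y - g x₀) * (y - x₀) ≤ C * (y - x₀) ^ 2 :=
    calc (g y - g x₀) * (y - x₀) ≤ |g y - g x₀| * (y - x₀) :=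
          mul_le_mul_of_nonneg_right (le_abs_self _) ht.le
      _ ≤ C * (y - x₀) * (y - x₀) := mul_le_mul_of_nonneg_right hyC ht.le
      _ = C * (y - x₀) ^ 2 := by ring
  linarith

theorem no_uniform_convexity_below_two_general
    (f : ℝ → ℝ) (a b : ℝ) (hab : a < b)
    (hf : ContDiffOn ℝ 2 f (Set.Ioo a b))
    (lam κ : ℝ) (hlam : 0 < lam) (hκ2 : κ < 2)
    (hUC : ∀ x ∈ Set.Ioo a b, ∀ y ∈ Set.Ioo a b,
      f y - f x - deriv f x * (y - x) ≥ (lam / 2) * |y - x| ^ κ) :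
    False := by
  have hx₀ : (a + b) / 2 ∈ Set.Ioo a b := ⟨by linarith, by linarith⟩
  have hf' : DifferentiableAt ℝ (deriv f) ((a + b) / 2) :=
    ((hf.deriv_of_isOpen isOpen_Ioo (m := 1) (by norm_num)).differentiableOn one_ne_zero)
      |>.differentiableAt (isOpen_Ioo.mem_nhds hx₀)
  refine not_eventually_mul_abs_sub_rpow_le_of_differentiableAt hf' hlam hκ2 ?_
  filter_upwards [isOpen_Ioo.mem_nhds hx₀] with y hy
  exact mul_abs_sub_rpow_le_sub_mul_sub hUC hx₀ hy

theorem no_uniform_convexity_below_two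
    (f : ℝ → ℝ) (a b : ℝ) (hab : a < b)
    (hf : ContDiffOn ℝ 2 f (Set.Ioo a b))
    (lam κ : ℝ) (hlam : 0 < lam) (hκ1 : 1 < κ) (hκ2 : κ < 2)
    (hUC : ∀ x ∈ Set.Ioo a b, ∀ y ∈ Set.Ioo a b,
      f y - f x - deriv f x * (y - x) ≥ (lam / 2) * |y - x| ^ κ) :
    False :=
  no_uniform_convexity_below_two_general f a b hab hf lam κ hlam hκ2 hUC
end

section
/- The function f₁ : ℝ^d → ℝ defined piecewise by f₁(x) = c₁(Σᵢ |x̃ᵢ|^κ + c₂) for x₁ ≤ 4a (where x̃ = x - 2a·e₁) and f₁(x) = c₁ Σᵢ |xᵢ|^κ for x₁ > 4a, with c₂ = (4a)^κ - (2a)^κ, is continuous and convex on ℝ^d, for any a > 0, κ > 1, c₁ > 0. -/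
/-!
With `φ u = |u| ^ κ` and `S x = ∑ i, φ (x i)`, the two branches of `f₁` are `c₁` times the
convex continuous functions `S (x - 2a e₁) + c₂` and `S x`. Their difference is
`φ (x₁) - φ (x₁ - 2a) - c₂`, where `c₂ = φ (4a) - φ (4a - 2a)` is the same increment taken at the
switching point `x₁ = 4a`. Increments of a convex function over a fixed step grow with the base
point, so the first branch dominates on `x₁ ≤ 4a` and the second on `x₁ ≥ 4a`: `f₁` is `c₁` times
the maximum of the two branches.
-/

open Set

lemma convexOn_univ_abs_rpow {p : ℝ} (hp : 1 ≤ p) : ConvexOn ℝ univ fun u : ℝ => |u| ^ p := by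
  have himage : norm '' (univ : Set ℝ) = Ici 0 := by rw [image_univ, range_norm]
  exact (himage ▸ convexOn_rpow hp).comp convexOn_univ_norm
    (himage ▸ Real.monotoneOn_rpow_Ici_of_exponent_nonneg (by linarith))

lemma ConvexOn.monotone_sub_comp_sub {φ : ℝ → ℝ} (hφ : ConvexOn ℝ univ φ) {h : ℝ} (hh : 0 ≤ h) :
    Monotone fun t => φ t - φ (t - h) := by
  intro s t hst
  rcases hh.eq_or_lt with rfl | hh
  · simp
  rcases hst.eq_or_lt with rfl | hst
  · rfl
  have h₁ := hφ.secant_mono (mem_univ (s - h)) (mem_univ s) (mem_univ t) (by linarith)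
    (by linarith) hst.le
  have h₂ := hφ.secant_mono (mem_univ t) (mem_univ (s - h)) (mem_univ (t - h)) (by linarith)
    (by linarith) (by linarith)
  rw [sub_sub_cancel] at h₁
  rw [← neg_div_neg_eq, neg_sub, neg_sub, ← neg_div_neg_eq (_ - _) (t - h - t), neg_sub, neg_sub,
    sub_sub_cancel] at h₂
  exact (div_le_div_iff_of_pos_right hh).1 (h₁.trans h₂)

lemma ConvexOn.comp_sub_const {E : Type*} [AddCommGroup E] [Module ℝ E] {f : E → ℝ}
    (hf : ConvexOn ℝ univ f) (b : E) : ConvexOn ℝ univ fun x => f (x - b) := by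
  simpa [Function.comp_def, neg_add_eq_sub] using hf.translate_right (-b)

section

variable {ι : Type*} [Fintype ι] {φ : ℝ → ℝ}

lemma convexOn_univ_sum_comp_apply (hφ : ConvexOn ℝ univ φ) :
    ConvexOn ℝ univ fun x : EuclideanSpace ℝ ι => ∑ i, φ (x i) := by
  have := Finset.sum_induction (s := Finset.univ) (fun i (x : EuclideanSpace ℝ ι) => φ (x i))
    (ConvexOn ℝ univ) (fun _ _ => ConvexOn.add) (convexOn_const 0 convex_univ)
    fun i _ => hφ.comp_linearMap (EuclideanSpace.proj i : EuclideanSpace ℝ ι →L[ℝ] ℝ).toLinearMap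
  simpa only [Finset.sum_fn] using this

lemma continuous_sum_comp_apply (hφ : Continuous φ) :
    Continuous fun x : EuclideanSpace ℝ ι => ∑ i, φ (x i) :=
  continuous_finsetSum _ fun i _ => hφ.comp (EuclideanSpace.proj i).continuous

variable [DecidableEq ι]

lemma sum_comp_apply_sub_sum_comp_apply_sub_smul_single (φ : ℝ → ℝ)
    (x : EuclideanSpace ℝ ι) (j : ι) (h : ℝ) :
    ∑ i, φ (x i) - ∑ i, φ ((x - h • EuclideanSpace.single j 1 : EuclideanSpace ℝ ι) i) =
      φ (x j) - φ (x j - h) := by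
  rw [← Finset.sum_sub_distrib, Finset.sum_eq_single j]
  · simp
  · intro i _ hij
    simp [hij]
  · simp

lemma ite_le_sum_comp_apply_eq_max (hφ : ConvexOn ℝ univ φ) {h : ℝ} (hh : 0 ≤ h) (j : ι)
    (t₀ : ℝ) (x : EuclideanSpace ℝ ι) :
    (if x j ≤ t₀ then
      ∑ i, φ ((x - h • EuclideanSpace.single j 1 : EuclideanSpace ℝ ι) i) + (φ t₀ - φ (t₀ - h))
    else ∑ i, φ (x i)) =
      max (∑ i, φ ((x - h • EuclideanSpace.single j 1 : EuclideanSpace ℝ ι) i) +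
        (φ t₀ - φ (t₀ - h))) (∑ i, φ (x i)) := by
  have hdiff := sum_comp_apply_sub_sum_comp_apply_sub_smul_single φ x j h
  have hmono := hφ.monotone_sub_comp_sub hh
  split_ifs with hx
  · exact (max_eq_left (by linarith [hmono hx])).symm
  · exact (max_eq_right (by linarith [hmono (le_of_not_ge hx)])).symm

end

theorem piecewise_f1_continuous_convex
    (d : ℕ) (hd : 0 < d) (κ a c₁ : ℝ) (hκ : 1 < κ) (ha : 0 < a) (hc₁ : 0 < c₁)
    (c₂ : ℝ) (hc₂ : c₂ = (4 * a) ^ κ - (2 * a) ^ κ)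
    (e₁ : EuclideanSpace ℝ (Fin d)) (he₁ : e₁ = EuclideanSpace.single ⟨0, hd⟩ 1)
    (f₁ : EuclideanSpace ℝ (Fin d) → ℝ)
    (hf₁ : ∀ x, f₁ x =
      if x ⟨0, hd⟩ ≤ 4 * a then
        c₁ * ((∑ i, |(x - (2 * a) • e₁) i| ^ κ) + c₂)
      else
        c₁ * ∑ i, |x i| ^ κ) :
    Continuous f₁ ∧ ConvexOn ℝ Set.univ f₁ := by
  set φ : ℝ → ℝ := fun u => |u| ^ κ
  have hφ : ConvexOn ℝ univ φ := convexOn_univ_abs_rpow hκ.le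
  have hc₂φ : c₂ = φ (4 * a) - φ (4 * a - 2 * a) := by
    simp only [φ]
    rw [hc₂, show 4 * a - 2 * a = 2 * a by ring, abs_of_pos (by positivity : 0 < 4 * a),
      abs_of_pos (by positivity : 0 < 2 * a)]
  set S : EuclideanSpace ℝ (Fin d) → ℝ := fun x => ∑ i, φ (x i)
  have hf : f₁ = fun x => c₁ * max (S (x - (2 * a) • e₁) + c₂) (S x) := by
    funext x
    rw [hf₁, ← mul_ite, hc₂φ, he₁, ite_le_sum_comp_apply_eq_max hφ (by positivity)]
  have hS : ConvexOn ℝ univ S := convexOn_univ_sum_comp_apply hφ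
  have hSc : Continuous S :=
    continuous_sum_comp_apply (continuous_abs.rpow_const fun _ => Or.inr (by linarith))
  rw [hf]
  exact ⟨continuous_const.mul
      (((hSc.comp (continuous_id.sub continuous_const)).add continuous_const).max hSc),
    ((hS.comp_sub_const _).add_const c₂ |>.sup hS).smul hc₁.le⟩
end
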